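/- (Luque–Thibon composition identity) Let k, n, p be even positive integers with k | n and n | p, and let f be a skew-symmetric k-ary function on [p]. Define the n-ary function g by g(i_1,...,i_n) = Pf_n(f restricted to {i_1,...,i_n}), the hyperpfaffian of order n of f on the given n indices. Then the hyperpfaffian of order p of g satisfies Pf(g) = (1/(p/n)!) · multinomial(p/k; n/k, n/k, ..., n/k) · Pf(f), where the multinomial coefficient has p/n entries equal to n/k. -/
import Mathlib


open Finset Equiv MvPolynomial

open scoped Classical

noncomputable section

/-- The position of the `j`-th element of the `i`-th block. -/
def bpos (m k : ℕ) (i : Fin m) (j : Fin k) : Fin (m * k) :=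
  ⟨k * (i : ℕ) + (j : ℕ), by
    have hi := i.isLt
    have hj := j.isLt
    calc k * (i : ℕ) + (j : ℕ) < k * (i : ℕ) + k := by omega
      _ = k * ((i : ℕ) + 1) := by ring
      _ ≤ k * m := Nat.mul_le_mul_left k hi
      _ = m * k := Nat.mul_comm k m⟩

/-- Each block of the (oriented) partition is listed in increasing order. -/
def IsBlockMono (m k : ℕ) (π : Equiv.Perm (Fin (m * k))) : Prop :=
  ∀ i : Fin m, StrictMono fun j : Fin k => π (bpos m k i j)

/-- The blocks are listed in increasing order of their first elements. -/
def IsLeadMono (m k : ℕ) (π : Equiv.Perm (Fin (m * k))) : Prop :=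
  ∀ (i i' : Fin m) (j : Fin k), i < i' →
    π (bpos m k i ⟨0, j.pos⟩) < π (bpos m k i' ⟨0, j.pos⟩)

/-- Canonical representative of a set partition of `[n]`, `n = m*k`, into `m` blocks of
size `k`: each block increasing and blocks ordered by their minima. -/
def IsPartRep (m k : ℕ) (π : Equiv.Perm (Fin (m * k))) : Prop :=
  IsBlockMono m k π ∧ IsLeadMono m k π

/-- A `k`-ary function is skew-symmetric. -/
def IsSkewFun {k : ℕ} {α R : Type*} [CommRing R] (f : (Fin k → α) → R) : Prop :=
  ∀ (σ : Equiv.Perm (Fin k)) (v : Fin k → α),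
    f (v ∘ σ) = (Equiv.Perm.sign σ : ℤ) • f v

/-- The hyperpfaffian of a skew-symmetric `k`-ary function on `[m*k]`:
the signed sum over all set partitions of `[m*k]` into `m` blocks of size `k`. -/
def hyperPf (m k : ℕ) {R : Type*} [CommRing R]
    (f : (Fin k → Fin (m * k)) → R) : R :=
  ∑ π ∈ Finset.univ.filter (IsPartRep m k),
    (Equiv.Perm.sign π : ℤ) • ∏ i : Fin m, f fun j => π (bpos m k i j)

/-- A polynomial in `k` variables is skew-symmetric. -/
def IsSkewPoly {k : ℕ} {R : Type*} [CommRing R] (f : MvPolynomial (Fin k) R) : Prop :=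
  ∀ σ : Equiv.Perm (Fin k),
    MvPolynomial.rename (⇑σ) f = (Equiv.Perm.sign σ : ℤ) • f

/-- The hyperpfaffian `Pf (f(x_S))` of the values of a polynomial `f` in `k` variables
at the variables indexed by the `k`-subsets `S` of `[m*k]`. -/
def hyperPfPoly (m k : ℕ) {R : Type*} [CommRing R]
    (f : MvPolynomial (Fin k) R) : MvPolynomial (Fin (m * k)) R :=
  ∑ π ∈ Finset.univ.filter (IsPartRep m k),
    (Equiv.Perm.sign π : ℤ) •
      ∏ i : Fin m, MvPolynomial.rename (fun j => π (bpos m k i j)) f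

/-- The Vandermonde product. -/
def vand (n : ℕ) (R : Type*) [CommRing R] : MvPolynomial (Fin n) R :=
  ∏ p ∈ Finset.univ.filter (fun p : Fin n × Fin n => p.1 < p.2),
    (MvPolynomial.X p.2 - MvPolynomial.X p.1)

/-- The coefficient of `f` at the monomial with exponent vector `r`. -/
def coeffOf {k : ℕ} {R : Type*} [CommRing R] (f : MvPolynomial (Fin k) R)
    (r : Fin k → ℕ) : R :=
  MvPolynomial.coeff (Finsupp.equivFunOnFinite.symm r) f

/-- Membership in `Γ_{n,k}`: a strictly increasing composition of `k/2*(n-1)`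
into `k` distinct nonnegative parts. -/
def InGamma (n k : ℕ) (r : Fin k → ℕ) : Prop :=
  StrictMono r ∧ ∑ j, r j = k / 2 * (n - 1)

/-- Canonical representative of an element `β` of `R_{n,k}`, encoded as a permutation `e` of
`Fin (m*k)` (identified with `{0,…,n-1}`): the blocks of `e` are the compositions of `β`,
each block is increasing and sums to `k/2*(n-1)`, and the blocks are ordered canonically. -/
def IsWeightRep (m k : ℕ) (e : Equiv.Perm (Fin (m * k))) : Prop :=
  IsPartRep m k e ∧
    ∀ i : Fin m, ∑ j : Fin k, ((e (bpos m k i j)) : ℕ) = k / 2 * (m * k - 1)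

/-- The weight of the element `x` of `[m*k]` in the weighted oriented partition with
oriented partition (representative) `π` and weight vectors `w`. -/
def wtOf (m k : ℕ) (π : Equiv.Perm (Fin (m * k))) (w : Fin m → Fin k → ℕ) :
    Fin (m * k) → ℕ := fun x =>
  w ⟨((π.symm x : Fin (m*k)) : ℕ) / k, Nat.div_lt_of_lt_mul (lt_of_lt_of_le (π.symm x).isLt (le_of_eq (Nat.mul_comm m k)))⟩
    ⟨((π.symm x : Fin (m*k)) : ℕ) % k, Nat.mod_lt _ (by
      have ht := (π.symm x).isLt
      have hk : k ≠ 0 := by rintro rfl; omega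
      omega)⟩

-- machinery
lemma bpos_eq (m k : ℕ) (i : Fin m) (j : Fin k) : bpos m k i j = finProdFinEquiv (i, j) := by
  apply Fin.ext
  simp [bpos, finProdFinEquiv]
  ring

lemma bpos_surj (m k : ℕ) (x : Fin (m * k)) : ∃ i j, x = bpos m k i j := by
  refine ⟨(finProdFinEquiv.symm x).1, (finProdFinEquiv.symm x).2, ?_⟩
  rw [bpos_eq]
  exact (Equiv.apply_symm_apply finProdFinEquiv x).symm

lemma bpos_right_injective (m k : ℕ) (i : Fin m) :
    Function.Injective (fun j : Fin k => bpos m k i j) := by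
  intro a b hab
  have : (bpos m k i a : ℕ) = (bpos m k i b : ℕ) := congrArg Fin.val hab
  simp only [bpos] at this
  exact Fin.ext (by omega)

/-- Block-diagonal permutation. -/
def bdiag (m k : ℕ) (τ : Fin m → Equiv.Perm (Fin k)) : Equiv.Perm (Fin (m * k)) :=
  finProdFinEquiv.permCongr (Equiv.prodCongrRight τ)

lemma bdiag_apply (m k : ℕ) (τ : Fin m → Equiv.Perm (Fin k)) (i : Fin m) (j : Fin k) :
    bdiag m k τ (bpos m k i j) = bpos m k i (τ i j) := by
  rw [bpos_eq, bpos_eq]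
  simp [bdiag, Equiv.permCongr_apply]

lemma sign_bdiag (m k : ℕ) (τ : Fin m → Equiv.Perm (Fin k)) :
    Equiv.Perm.sign (bdiag m k τ) = ∏ i, Equiv.Perm.sign (τ i) := by
  rw [bdiag, Equiv.Perm.sign_permCongr, Equiv.Perm.sign_prodCongrRight]

lemma perm_ext_bpos {m k : ℕ} {e e' : Equiv.Perm (Fin (m * k))}
    (h : ∀ i j, e (bpos m k i j) = e' (bpos m k i j)) : e = e' := by
  ext x
  obtain ⟨i, j, rfl⟩ := bpos_surj m k x
  exact congrArg Fin.val (h i j)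

lemma bdiag_mul (m k : ℕ) (τ τ' : Fin m → Equiv.Perm (Fin k)) :
    bdiag m k τ * bdiag m k τ' = bdiag m k (fun i => τ i * τ' i) := by
  apply perm_ext_bpos
  intro i j
  simp [Equiv.Perm.mul_apply, bdiag_apply]

lemma bdiag_one (m k : ℕ) : bdiag m k (fun _ => 1) = 1 := by
  apply perm_ext_bpos
  intro i j
  simp [bdiag_apply]

/-- Block-permuting permutation. -/
def bperm (m k : ℕ) (ρ : Equiv.Perm (Fin m)) : Equiv.Perm (Fin (m * k)) :=
  finProdFinEquiv.permCongr (Equiv.prodCongr ρ (Equiv.refl (Fin k)))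

lemma bperm_apply (m k : ℕ) (ρ : Equiv.Perm (Fin m)) (i : Fin m) (j : Fin k) :
    bperm m k ρ (bpos m k i j) = bpos m k (ρ i) j := by
  rw [bpos_eq, bpos_eq]
  simp [bperm, Equiv.permCongr_apply]

lemma sign_bperm (m k : ℕ) (ρ : Equiv.Perm (Fin m)) :
    Equiv.Perm.sign (bperm m k ρ) = Equiv.Perm.sign ρ ^ k := by
  rw [bperm, Equiv.Perm.sign_permCongr, Equiv.prodCongr_refl_right,
    Equiv.Perm.sign_prodCongrLeft]
  simp

lemma bperm_mul (m k : ℕ) (ρ ρ' : Equiv.Perm (Fin m)) :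
    bperm m k ρ * bperm m k ρ' = bperm m k (ρ * ρ') := by
  apply perm_ext_bpos
  intro i j
  simp [Equiv.Perm.mul_apply, bperm_apply]

lemma bperm_one (m k : ℕ) : bperm m k 1 = 1 := by
  apply perm_ext_bpos
  intro i j
  simp [bperm_apply]

/-- Uniqueness of the sorting permutation of an injective tuple. -/
lemma sort_unique {n : ℕ} {α : Type*} [LinearOrder α] {g : Fin n → α}
    (hg : Function.Injective g) {u : Equiv.Perm (Fin n)} (hu : StrictMono (g ∘ u)) :
    u = Tuple.sort g := by
  have h1 : StrictMono (g ∘ Tuple.sort g) :=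
    (Tuple.monotone_sort g).strictMono_of_injective (hg.comp (Tuple.sort g).injective)
  set w : Equiv.Perm (Fin n) := u.trans (Tuple.sort g).symm with hw
  have hwm : StrictMono w := by
    intro a b hab
    have h2 : g (u a) < g (u b) := hu hab
    have h3 : ∀ x, g (Tuple.sort g (w x)) = g (u x) := by
      intro x; simp [hw]
    rw [← h3 a, ← h3 b] at h2
    exact h1.lt_iff_lt.mp h2
  have hw1 : w = Equiv.refl _ := by
    have hs := Subsingleton.elim
      (StrictMono.orderIsoOfSurjective (w : Fin n → Fin n) hwm w.surjective)
      (OrderIso.refl (Fin n))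
    apply Equiv.ext
    intro x
    have := congrArg (fun (e : Fin n ≃o Fin n) => e x) hs
    simpa using this
  have : u = w.trans (Tuple.sort g) := by
    ext x
    simp [hw]
  rw [this, hw1]
  rfl

-- part 2
lemma block_injective (m k : ℕ) (σ : Equiv.Perm (Fin (m * k))) (i : Fin m) :
    Function.Injective (fun j : Fin k => σ (bpos m k i j)) :=
  fun a b hab => bpos_right_injective m k i (σ.injective hab)

/-- The permutation sorting each block of `σ`. -/
def blockSort (m k : ℕ) (σ : Equiv.Perm (Fin (m * k))) : Fin m → Equiv.Perm (Fin k) :=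
  fun i => Tuple.sort (fun j => σ (bpos m k i j))

lemma isBlockMono_sorted (m k : ℕ) (σ : Equiv.Perm (Fin (m * k))) :
    IsBlockMono m k (σ * bdiag m k (blockSort m k σ)) := by
  intro i
  have h1 : Monotone ((fun j => σ (bpos m k i j)) ∘ (blockSort m k σ i)) :=
    Tuple.monotone_sort _
  have h2 : StrictMono ((fun j => σ (bpos m k i j)) ∘ (blockSort m k σ i)) :=
    h1.strictMono_of_injective ((block_injective m k σ i).comp (blockSort m k σ i).injective)
  intro a b hab
  simp only [Equiv.Perm.mul_apply, bdiag_apply]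
  exact h2 hab

lemma blockSort_mul_bdiag (m k : ℕ) (σ : Equiv.Perm (Fin (m * k)))
    (hσ : IsBlockMono m k σ) (τ : Fin m → Equiv.Perm (Fin k)) (i : Fin m) :
    blockSort m k (σ * bdiag m k τ) i = (τ i)⁻¹ := by
  have hfun : (fun j => (σ * bdiag m k τ) (bpos m k i j))
      = (fun j => σ (bpos m k i j)) ∘ (τ i) := by
    funext j
    simp [Equiv.Perm.mul_apply, bdiag_apply]
  have hinj : Function.Injective ((fun j => σ (bpos m k i j)) ∘ (τ i)) :=
    (block_injective m k σ i).comp (τ i).injective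
  have hsm : StrictMono (((fun j => σ (bpos m k i j)) ∘ (τ i)) ∘ ⇑(τ i)⁻¹) := by
    have heq : (((fun j => σ (bpos m k i j)) ∘ (τ i)) ∘ ⇑(τ i)⁻¹)
        = fun j => σ (bpos m k i j) := by
      funext j; simp
    rw [heq]
    exact hσ i
  rw [blockSort, hfun]
  exact (sort_unique hinj hsm).symm

/-- Decomposing the sum over all permutations via sorting each block. -/
lemma mul_bdiag_inv (m k : ℕ) (σ : Equiv.Perm (Fin (m * k)))
    (τ : Fin m → Equiv.Perm (Fin k)) :
    σ * bdiag m k τ * bdiag m k (fun l => (τ l)⁻¹) = σ := by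
  rw [mul_assoc, bdiag_mul]
  have : (fun i => τ i * (τ i)⁻¹) = fun _ : Fin m => (1 : Equiv.Perm (Fin k)) := by
    funext i; group
  rw [this, bdiag_one, mul_one]

lemma sum_perm_decomp {R : Type*} [AddCommMonoid R] (m k : ℕ)
    (h : Equiv.Perm (Fin (m * k)) → R) :
    ∑ σ : Equiv.Perm (Fin (m * k)), h σ =
      ∑ σ ∈ Finset.univ.filter (IsBlockMono m k),
        ∑ τ : Fin m → Equiv.Perm (Fin k), h (σ * bdiag m k τ) := by
  rw [← Finset.sum_product']
  refine Finset.sum_nbij'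
    (i := fun σ => (σ * bdiag m k (blockSort m k σ), fun l => (blockSort m k σ l)⁻¹))
    (j := fun p => p.1 * bdiag m k p.2) ?_ ?_ ?_ ?_ ?_
  · intro σ _
    rw [Finset.mem_product]
    refine ⟨Finset.mem_filter.mpr ⟨Finset.mem_univ _, isBlockMono_sorted m k σ⟩,
      Finset.mem_univ _⟩
  · intro p _
    exact Finset.mem_univ _
  · intro σ _
    exact mul_bdiag_inv m k σ (blockSort m k σ)
  · rintro ⟨π, τ⟩ hp
    rw [Finset.mem_product, Finset.mem_filter] at hp
    obtain ⟨⟨-, hbm⟩, -⟩ := hp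
    have hbsf : blockSort m k (π * bdiag m k τ) = fun l => (τ l)⁻¹ :=
      funext (blockSort_mul_bdiag m k π hbm τ)
    simp only [hbsf, inv_inv]
    rw [mul_bdiag_inv m k π τ]
  · intro σ _
    rw [mul_bdiag_inv m k σ (blockSort m k σ)]

-- part 3: lead sorting
lemma lead_injective (m k : ℕ) (hk0 : 0 < k) (σ : Equiv.Perm (Fin (m * k))) :
    Function.Injective (fun i : Fin m => σ (bpos m k i ⟨0, hk0⟩)) := by
  intro a b hab
  have h := σ.injective hab
  have : (bpos m k a ⟨0, hk0⟩ : ℕ) = (bpos m k b ⟨0, hk0⟩ : ℕ) := congrArg Fin.val h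
  simp only [bpos] at this
  have ha := a.isLt
  have hb := b.isLt
  exact Fin.ext (Nat.eq_of_mul_eq_mul_left hk0 (by omega))

/-- The permutation sorting the blocks of `σ` by their leads. -/
def leadSort (m k : ℕ) (hk0 : 0 < k) (σ : Equiv.Perm (Fin (m * k))) : Equiv.Perm (Fin m) :=
  Tuple.sort (fun i => σ (bpos m k i ⟨0, hk0⟩))

lemma isBlockMono_mul_bperm (m k : ℕ) (σ : Equiv.Perm (Fin (m * k)))
    (hσ : IsBlockMono m k σ) (ρ : Equiv.Perm (Fin m)) :
    IsBlockMono m k (σ * bperm m k ρ) := by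
  intro i a b hab
  simp only [Equiv.Perm.mul_apply, bperm_apply]
  exact hσ (ρ i) hab

lemma isPartRep_mul_leadSort (m k : ℕ) (hk0 : 0 < k) (σ : Equiv.Perm (Fin (m * k)))
    (hσ : IsBlockMono m k σ) :
    IsPartRep m k (σ * bperm m k (leadSort m k hk0 σ)) := by
  constructor
  · exact isBlockMono_mul_bperm m k σ hσ _
  · intro i i' j hii
    have h1 : Monotone ((fun i => σ (bpos m k i ⟨0, hk0⟩)) ∘ (leadSort m k hk0 σ)) :=
      Tuple.monotone_sort _
    have h2 : StrictMono ((fun i => σ (bpos m k i ⟨0, hk0⟩)) ∘ (leadSort m k hk0 σ)) :=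
      h1.strictMono_of_injective
        ((lead_injective m k hk0 σ).comp (leadSort m k hk0 σ).injective)
    have e : ∀ (a : Fin m), (σ * bperm m k (leadSort m k hk0 σ)) (bpos m k a ⟨0, j.pos⟩)
        = ((fun i => σ (bpos m k i ⟨0, hk0⟩)) ∘ (leadSort m k hk0 σ)) a := by
      intro a
      simp only [Equiv.Perm.mul_apply, bperm_apply, Function.comp]
    rw [e i, e i']
    exact h2 hii

lemma leadSort_mul_bperm (m k : ℕ) (hk0 : 0 < k) (π : Equiv.Perm (Fin (m * k)))
    (hπ : IsPartRep m k π) (ρ : Equiv.Perm (Fin m)) :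
    leadSort m k hk0 (π * bperm m k ρ) = ρ⁻¹ := by
  have hL : StrictMono (fun i : Fin m => π (bpos m k i ⟨0, hk0⟩)) := by
    intro a b hab
    exact hπ.2 a b ⟨0, hk0⟩ hab
  have hfun : (fun i : Fin m => (π * bperm m k ρ) (bpos m k i ⟨0, hk0⟩))
      = (fun i => π (bpos m k i ⟨0, hk0⟩)) ∘ ρ := by
    funext i
    simp only [Equiv.Perm.mul_apply, bperm_apply, Function.comp]
  have hinj : Function.Injective ((fun i => π (bpos m k i ⟨0, hk0⟩)) ∘ ρ) :=
    (lead_injective m k hk0 π).comp ρ.injective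
  have hsm : StrictMono (((fun i => π (bpos m k i ⟨0, hk0⟩)) ∘ ρ) ∘ ⇑ρ⁻¹) := by
    have heq : (((fun i => π (bpos m k i ⟨0, hk0⟩)) ∘ ρ) ∘ ⇑ρ⁻¹)
        = fun i => π (bpos m k i ⟨0, hk0⟩) := by
      funext i; simp
    rw [heq]
    exact hL
  rw [leadSort, hfun]
  exact (sort_unique hinj hsm).symm

lemma mul_bperm_inv (m k : ℕ) (σ : Equiv.Perm (Fin (m * k))) (ρ : Equiv.Perm (Fin m)) :
    σ * bperm m k ρ * bperm m k ρ⁻¹ = σ := by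
  rw [mul_assoc, bperm_mul]
  group
  rw [bperm_one, mul_one]

/-- Decomposing the sum over block-monotone permutations via sorting the leads. -/
lemma sum_blockMono_decomp {R : Type*} [AddCommMonoid R] (m k : ℕ) (hk0 : 0 < k)
    (h : Equiv.Perm (Fin (m * k)) → R) :
    ∑ σ ∈ Finset.univ.filter (IsBlockMono m k), h σ =
      ∑ σ ∈ Finset.univ.filter (IsPartRep m k),
        ∑ ρ : Equiv.Perm (Fin m), h (σ * bperm m k ρ) := by
  rw [← Finset.sum_product']
  refine Finset.sum_nbij'
    (i := fun σ => (σ * bperm m k (leadSort m k hk0 σ), (leadSort m k hk0 σ)⁻¹))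
    (j := fun p => p.1 * bperm m k p.2) ?_ ?_ ?_ ?_ ?_
  · intro σ hσ
    rw [Finset.mem_filter] at hσ
    rw [Finset.mem_product]
    exact ⟨Finset.mem_filter.mpr ⟨Finset.mem_univ _,
      isPartRep_mul_leadSort m k hk0 σ hσ.2⟩, Finset.mem_univ _⟩
  · rintro ⟨π, ρ⟩ hp
    rw [Finset.mem_product, Finset.mem_filter] at hp
    exact Finset.mem_filter.mpr ⟨Finset.mem_univ _,
      isBlockMono_mul_bperm m k π hp.1.2.1 ρ⟩
  · intro σ _
    exact mul_bperm_inv m k σ (leadSort m k hk0 σ)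
  · rintro ⟨π, ρ⟩ hp
    rw [Finset.mem_product, Finset.mem_filter] at hp
    have hls : leadSort m k hk0 (π * bperm m k ρ) = ρ⁻¹ :=
      leadSort_mul_bperm m k hk0 π hp.1.2 ρ
    simp only [hls, inv_inv]
    rw [mul_bperm_inv m k π ρ]
  · intro σ _
    rw [mul_bperm_inv m k σ (leadSort m k hk0 σ)]

-- part 4
lemma int_units_mul_self (u : ℤˣ) : (u : ℤ) * (u : ℤ) = 1 := by
  rcases Int.units_eq_one_or u with h | h <;> simp [h]

lemma int_units_cast_mul_self {R : Type*} [CommRing R] (u : ℤˣ) :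
    ((u : ℤ) : R) * ((u : ℤ) : R) = 1 := by
  rw [← Int.cast_mul, int_units_mul_self, Int.cast_one]

lemma units_pow_even (u : ℤˣ) {k : ℕ} (hk : Even k) : u ^ k = 1 := by
  obtain ⟨t, rfl⟩ := hk
  have : u * u = 1 := by rcases Int.units_eq_one_or u with h | h <;> simp [h]
  calc u ^ (t + t) = (u * u) ^ t := by rw [pow_add, ← mul_pow]
    _ = 1 := by rw [this, one_pow]

section Wlemmas

variable {R : Type*} [CommRing R]

/-- The full-sum summand. -/
def Wfun (m k : ℕ) (f : (Fin k → Fin (m * k)) → R) (σ : Equiv.Perm (Fin (m * k))) : R :=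
  (Equiv.Perm.sign σ : ℤ) • ∏ i : Fin m, f fun j => σ (bpos m k i j)

lemma Wfun_bdiag (m k : ℕ) (f : (Fin k → Fin (m * k)) → R) (hf : IsSkewFun f)
    (σ : Equiv.Perm (Fin (m * k))) (τ : Fin m → Equiv.Perm (Fin k)) :
    Wfun m k f (σ * bdiag m k τ) = Wfun m k f σ := by
  unfold Wfun
  have hsign : Equiv.Perm.sign (σ * bdiag m k τ)
      = Equiv.Perm.sign σ * ∏ i, Equiv.Perm.sign (τ i) := by
    rw [map_mul, sign_bdiag]
  have hprod : ∀ i : Fin m, (f fun j => (σ * bdiag m k τ) (bpos m k i j))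
      = (Equiv.Perm.sign (τ i) : ℤ) • f fun j => σ (bpos m k i j) := by
    intro i
    have : (fun j => (σ * bdiag m k τ) (bpos m k i j))
        = (fun j => σ (bpos m k i j)) ∘ (τ i) := by
      funext j
      simp [Equiv.Perm.mul_apply, bdiag_apply]
    rw [this, hf]
  rw [hsign]
  simp only [hprod, zsmul_eq_mul]
  rw [Finset.prod_mul_distrib]
  have hcast : ((Equiv.Perm.sign σ * ∏ i, Equiv.Perm.sign (τ i) : ℤˣ) : ℤ)
      = (Equiv.Perm.sign σ : ℤ) * ∏ i, (Equiv.Perm.sign (τ i) : ℤ) := by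
    rw [Units.val_mul]
    congr 1
    exact map_prod (Units.coeHom ℤ) _ _
  rw [hcast]
  push_cast
  have hPP : (∏ i : Fin m, ((Equiv.Perm.sign (τ i) : ℤ) : R))
      * (∏ i : Fin m, ((Equiv.Perm.sign (τ i) : ℤ) : R)) = 1 := by
    rw [← Finset.prod_mul_distrib]
    rw [Finset.prod_congr rfl (fun i _ => int_units_cast_mul_self (Equiv.Perm.sign (τ i)))]
    exact Finset.prod_const_one
  calc ((Equiv.Perm.sign σ : ℤ) : R) * (∏ i : Fin m, ((Equiv.Perm.sign (τ i) : ℤ) : R))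
        * ((∏ i : Fin m, ((Equiv.Perm.sign (τ i) : ℤ) : R))
          * ∏ i : Fin m, f fun j => σ (bpos m k i j))
      = ((Equiv.Perm.sign σ : ℤ) : R)
        * ((∏ i : Fin m, ((Equiv.Perm.sign (τ i) : ℤ) : R))
          * (∏ i : Fin m, ((Equiv.Perm.sign (τ i) : ℤ) : R)))
        * ∏ i : Fin m, f fun j => σ (bpos m k i j) := by ring
    _ = ((Equiv.Perm.sign σ : ℤ) : R) * ∏ i : Fin m, f fun j => σ (bpos m k i j) := by
        rw [hPP, mul_one]

lemma Wfun_bperm (m k : ℕ) (hk : Even k) (f : (Fin k → Fin (m * k)) → R)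
    (σ : Equiv.Perm (Fin (m * k))) (ρ : Equiv.Perm (Fin m)) :
    Wfun m k f (σ * bperm m k ρ) = Wfun m k f σ := by
  unfold Wfun
  have hsign : Equiv.Perm.sign (σ * bperm m k ρ) = Equiv.Perm.sign σ := by
    rw [map_mul, sign_bperm, units_pow_even _ hk, mul_one]
  have hprod : (∏ i : Fin m, f fun j => (σ * bperm m k ρ) (bpos m k i j))
      = ∏ i : Fin m, f fun j => σ (bpos m k i j) := by
    have h1 : ∀ i : Fin m, (f fun j => (σ * bperm m k ρ) (bpos m k i j))
        = f fun j => σ (bpos m k (ρ i) j) := by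
      intro i
      congr 1
      funext j
      simp [Equiv.Perm.mul_apply, bperm_apply]
    simp only [h1]
    exact Equiv.prod_comp ρ (fun i => f fun j => σ (bpos m k i j))
  rw [hsign, hprod]

/-- Key Lemma: the sum over all permutations equals `m! * k!^m` times the hyperpfaffian. -/
lemma full_sum_eq (m k : ℕ) (hk : Even k) (hk0 : 0 < k)
    (f : (Fin k → Fin (m * k)) → R) (hf : IsSkewFun f) :
    ∑ σ : Equiv.Perm (Fin (m * k)), Wfun m k f σ
      = (m.factorial * k.factorial ^ m) • hyperPf m k f := by
  rw [sum_perm_decomp m k (Wfun m k f)]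
  have h1 : ∀ σ : Equiv.Perm (Fin (m * k)),
      (∑ τ : Fin m → Equiv.Perm (Fin k), Wfun m k f (σ * bdiag m k τ))
        = (k.factorial ^ m) • Wfun m k f σ := by
    intro σ
    rw [Finset.sum_congr rfl (fun τ _ => Wfun_bdiag m k f hf σ τ), Finset.sum_const]
    congr 1
    simp [Fintype.card_perm]
  rw [Finset.sum_congr rfl (fun σ _ => h1 σ), ← Finset.smul_sum]
  rw [sum_blockMono_decomp m k hk0 (Wfun m k f)]
  have h2 : ∀ σ : Equiv.Perm (Fin (m * k)),
      (∑ ρ : Equiv.Perm (Fin m), Wfun m k f (σ * bperm m k ρ))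
        = m.factorial • Wfun m k f σ := by
    intro σ
    rw [Finset.sum_congr rfl (fun ρ _ => Wfun_bperm m k hk f σ ρ), Finset.sum_const]
    congr 1
    simp [Fintype.card_perm]
  rw [Finset.sum_congr rfl (fun σ _ => h2 σ), ← Finset.smul_sum]
  rw [smul_smul, mul_comm]
  rfl

end Wlemmas

section MainParts

variable {R : Type*} [CommRing R]

lemma prod_nsmul_fin {n : ℕ} (N : ℕ) (x : Fin n → R) :
    ∏ i, (N • x i) = (N ^ n) • ∏ i, x i := by
  simp only [nsmul_eq_mul]
  rw [Finset.prod_mul_distrib, Finset.prod_const]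
  simp only [Finset.card_univ, Fintype.card_fin]
  push_cast
  ring

lemma prod_zsmul_fin {n : ℕ} (z : Fin n → ℤ) (x : Fin n → R) :
    ∏ i, (z i • x i) = (∏ i, z i) • ∏ i, x i := by
  simp only [zsmul_eq_mul]
  rw [Finset.prod_mul_distrib]
  push_cast
  ring

lemma nsmul_zsmul_comm (N : ℕ) (z : ℤ) (x : R) : N • (z • x) = z • (N • x) := by
  simp only [nsmul_eq_mul, zsmul_eq_mul]
  ring

lemma sign_mul_bdiag (m k : ℕ) (π : Equiv.Perm (Fin (m * k)))
    (τ : Fin m → Equiv.Perm (Fin k)) :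
    (Equiv.Perm.sign (π * bdiag m k τ) : ℤ)
      = (Equiv.Perm.sign π : ℤ) * ∏ i, (Equiv.Perm.sign (τ i) : ℤ) := by
  rw [map_mul, sign_bdiag, Units.val_mul]
  congr 1
  exact map_prod (Units.coeHom ℤ) _ _

lemma bpos_assoc (d c k : ℕ) (i : Fin d) (l : Fin c) (j : Fin k) :
    (finCongr (Nat.mul_assoc d c k).symm) (bpos d (c * k) i (bpos c k l j))
      = bpos (d * c) k (finProdFinEquiv (i, l)) j := by
  apply Fin.ext
  simp [bpos, finProdFinEquiv, finCongr]
  ring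

end MainParts

section Tlemmas

variable {R : Type*} [CommRing R]

/-- The grand summand. -/
def Tfun (d c k : ℕ) (f : (Fin k → Fin (d * c * k)) → R)
    (σ : Equiv.Perm (Fin (d * (c * k)))) : R :=
  (Equiv.Perm.sign σ : ℤ) • ∏ i : Fin d, ∏ l : Fin c,
    f fun j => finCongr (Nat.mul_assoc d c k).symm (σ (bpos d (c * k) i (bpos c k l j)))

lemma Tfun_bperm (d c k : ℕ) (hk : Even k) (f : (Fin k → Fin (d * c * k)) → R)
    (σ : Equiv.Perm (Fin (d * (c * k)))) (ρ : Equiv.Perm (Fin d)) :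
    Tfun d c k f (σ * bperm d (c * k) ρ) = Tfun d c k f σ := by
  unfold Tfun
  have hsign : Equiv.Perm.sign (σ * bperm d (c * k) ρ) = Equiv.Perm.sign σ := by
    rw [map_mul, sign_bperm, units_pow_even _ (hk.mul_left c), mul_one]
  have hbody : ∀ i : Fin d, (∏ l : Fin c,
        f fun j => finCongr (Nat.mul_assoc d c k).symm
          ((σ * bperm d (c * k) ρ) (bpos d (c * k) i (bpos c k l j))))
      = ∏ l : Fin c, f fun j => finCongr (Nat.mul_assoc d c k).symm
          (σ (bpos d (c * k) (ρ i) (bpos c k l j))) := by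
    intro i
    refine Finset.prod_congr rfl fun l _ => ?_
    congr 1
    funext j
    simp [Equiv.Perm.mul_apply, bperm_apply]
  rw [hsign]
  simp only [hbody]
  congr 1
  exact Equiv.prod_comp ρ fun i => ∏ l : Fin c,
    f fun j => finCongr (Nat.mul_assoc d c k).symm (σ (bpos d (c * k) i (bpos c k l j)))

lemma Tfun_eq_Wfun (d c k : ℕ) (f : (Fin k → Fin (d * c * k)) → R)
    (σ : Equiv.Perm (Fin (d * (c * k)))) :
    Tfun d c k f σ
      = Wfun (d * c) k f ((finCongr (Nat.mul_assoc d c k).symm).permCongr σ) := by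
  unfold Tfun Wfun
  set E := finCongr (Nat.mul_assoc d c k).symm with hE
  have hsign : Equiv.Perm.sign (E.permCongr σ) = Equiv.Perm.sign σ :=
    Equiv.Perm.sign_permCongr E σ
  rw [hsign]
  congr 1
  rw [← Equiv.prod_comp finProdFinEquiv
    (fun I : Fin (d * c) => f fun j => (E.permCongr σ) (bpos (d * c) k I j)),
    Fintype.prod_prod_type]
  refine Finset.prod_congr rfl fun i _ => Finset.prod_congr rfl fun l _ => ?_
  congr 1
  funext j
  rw [← bpos_assoc d c k i l j]
  simp only [Equiv.permCongr_apply]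
  exact congrArg (fun y => E (σ y)) (E.symm_apply_apply _).symm

end Tlemmas


end
theorem stmt19 (k c d : ℕ) (hk : Even k) (hk0 : 0 < k) (hc : 0 < c) (hd : 0 < d)
    (R : Type*) [CommRing R] [Algebra ℚ R]
    (f : (Fin k → Fin (d * c * k)) → R) (hf : IsSkewFun f) :
    hyperPf d (c * k) (fun v : Fin (c * k) → Fin (d * (c * k)) =>
        ∑ π ∈ Finset.univ.filter (IsPartRep c k),
          (Equiv.Perm.sign π : ℤ) •
            ∏ i : Fin c, f fun j =>
              finCongr (Nat.mul_assoc d c k).symm (v (π (bpos c k i j))))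
      = ((1 / (d.factorial : ℚ)) *
            ((d * c).factorial / ((c.factorial : ℚ) ^ d))) •
          hyperPf (d * c) k f := by
  classical
  have hK0 : 0 < c * k := Nat.mul_pos hc hk0
  have hKEven : Even (c * k) := hk.mul_left c
  set N1 : ℕ := c.factorial * k.factorial ^ c with hN1
  -- inner expansion
  have inner : ∀ v : Fin (c * k) → Fin (d * (c * k)),
      (N1 : R) * (∑ π ∈ Finset.univ.filter (IsPartRep c k),
          (Equiv.Perm.sign π : ℤ) •
            ∏ i : Fin c, f fun j =>
              finCongr (Nat.mul_assoc d c k).symm (v (π (bpos c k i j))))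
        = ∑ τ : Equiv.Perm (Fin (c * k)),
            Wfun c k (fun w => f fun j =>
              finCongr (Nat.mul_assoc d c k).symm (v (w j))) τ := by
    intro v
    have hfv : IsSkewFun (fun w : Fin k → Fin (c * k) =>
        f fun j => finCongr (Nat.mul_assoc d c k).symm (v (w j))) := by
      intro u w
      simpa [Function.comp_def] using hf u (fun j => finCongr (Nat.mul_assoc d c k).symm (v (w j)))
    rw [full_sum_eq c k hk hk0 _ hfv, nsmul_eq_mul]
    rfl
  -- claim 1
  have claim1 : (N1 ^ d) • hyperPf d (c * k) (fun v : Fin (c * k) → Fin (d * (c * k)) =>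
        ∑ π ∈ Finset.univ.filter (IsPartRep c k),
          (Equiv.Perm.sign π : ℤ) •
            ∏ i : Fin c, f fun j =>
              finCongr (Nat.mul_assoc d c k).symm (v (π (bpos c k i j))))
      = ∑ π ∈ Finset.univ.filter (IsPartRep d (c * k)),
          ∑ τ : Fin d → Equiv.Perm (Fin (c * k)),
            Tfun d c k f (π * bdiag d (c * k) τ) := by
    rw [hyperPf, Finset.smul_sum]
    refine Finset.sum_congr rfl fun π hπ => ?_
    rw [nsmul_zsmul_comm, ← prod_nsmul_fin]
    simp only [nsmul_eq_mul]
    have hprod : (∏ x : Fin d, ((N1 : R) *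
          ∑ π' ∈ Finset.univ.filter (IsPartRep c k),
            (Equiv.Perm.sign π' : ℤ) •
              ∏ l : Fin c, f fun j =>
                finCongr (Nat.mul_assoc d c k).symm (π (bpos d (c * k) x (π' (bpos c k l j))))))
        = ∏ x : Fin d, ∑ τ : Equiv.Perm (Fin (c * k)),
            Wfun c k (fun w => f fun j =>
              finCongr (Nat.mul_assoc d c k).symm (π (bpos d (c * k) x (w j)))) τ :=
      Finset.prod_congr rfl fun i _ => inner (fun y => π (bpos d (c * k) i y))
    rw [hprod]
    rw [Fintype.prod_sum, Finset.smul_sum]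
    refine Finset.sum_congr rfl fun τ _ => ?_
    simp only [Wfun, Tfun]
    rw [prod_zsmul_fin, smul_smul, sign_mul_bdiag d (c * k) π τ]
    congr 1
    refine Finset.prod_congr rfl fun i _ => Finset.prod_congr rfl fun l _ => ?_
    congr 1
    funext j
    congr 1
    simp [Equiv.Perm.mul_apply, bdiag_apply]
  -- claim 2
  have claim2 : d.factorial • (∑ π ∈ Finset.univ.filter (IsPartRep d (c * k)),
        ∑ τ : Fin d → Equiv.Perm (Fin (c * k)), Tfun d c k f (π * bdiag d (c * k) τ))
      = ∑ σ : Equiv.Perm (Fin (d * (c * k))), Tfun d c k f σ := by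
    rw [sum_perm_decomp d (c * k) (Tfun d c k f)]
    rw [sum_blockMono_decomp d (c * k) hK0
      (fun σ => ∑ τ : Fin d → Equiv.Perm (Fin (c * k)), Tfun d c k f (σ * bdiag d (c * k) τ))]
    rw [Finset.smul_sum]
    refine (Finset.sum_congr rfl fun π hπ => ?_)
    have hU : ∀ ρ : Equiv.Perm (Fin d),
        (∑ τ : Fin d → Equiv.Perm (Fin (c * k)),
          Tfun d c k f (π * bperm d (c * k) ρ * bdiag d (c * k) τ))
        = ∑ τ : Fin d → Equiv.Perm (Fin (c * k)), Tfun d c k f (π * bdiag d (c * k) τ) := by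
      intro ρ
      have hcomm : ∀ τ : Fin d → Equiv.Perm (Fin (c * k)),
          π * bperm d (c * k) ρ * bdiag d (c * k) τ
            = π * bdiag d (c * k) (fun i => τ (ρ⁻¹ i)) * bperm d (c * k) ρ := by
        intro τ
        apply perm_ext_bpos
        intro i j
        simp [Equiv.Perm.mul_apply, bdiag_apply, bperm_apply]
      calc (∑ τ : Fin d → Equiv.Perm (Fin (c * k)),
            Tfun d c k f (π * bperm d (c * k) ρ * bdiag d (c * k) τ))
          = ∑ τ : Fin d → Equiv.Perm (Fin (c * k)),
              Tfun d c k f (π * bdiag d (c * k) (fun i => τ (ρ⁻¹ i))) := by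
            refine Finset.sum_congr rfl fun τ _ => ?_
            rw [hcomm τ, Tfun_bperm d c k hk f _ ρ]
        _ = ∑ τ : Fin d → Equiv.Perm (Fin (c * k)),
              Tfun d c k f (π * bdiag d (c * k) τ) := by
            refine Fintype.sum_equiv (Equiv.arrowCongr (ρ : Equiv.Perm (Fin d))
              (Equiv.refl (Equiv.Perm (Fin (c * k))))) _ _ fun τ => ?_
            congr 1
    rw [Finset.sum_congr rfl fun ρ _ => hU ρ, Finset.sum_const]
    simp [Fintype.card_perm]
  -- claim 3
  have claim3 : (∑ σ : Equiv.Perm (Fin (d * (c * k))), Tfun d c k f σ)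
      = ∑ σ' : Equiv.Perm (Fin (d * c * k)), Wfun (d * c) k f σ' :=
    Fintype.sum_equiv ((finCongr (Nat.mul_assoc d c k).symm).permCongr) _ _
      fun σ => Tfun_eq_Wfun d c k f σ
  have claim4 : (∑ σ' : Equiv.Perm (Fin (d * c * k)), Wfun (d * c) k f σ')
      = ((d * c).factorial * k.factorial ^ (d * c)) • hyperPf (d * c) k f :=
    full_sum_eq (d * c) k hk hk0 f hf
  have hbig : (d.factorial * N1 ^ d) • hyperPf d (c * k)
        (fun v : Fin (c * k) → Fin (d * (c * k)) =>
          ∑ π ∈ Finset.univ.filter (IsPartRep c k),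
            (Equiv.Perm.sign π : ℤ) •
              ∏ i : Fin c, f fun j =>
                finCongr (Nat.mul_assoc d c k).symm (v (π (bpos c k i j))))
      = ((d * c).factorial * k.factorial ^ (d * c)) • hyperPf (d * c) k f := by
    rw [mul_smul, claim1, claim2, claim3, claim4]
  -- final rational cancellation
  set A : ℕ := d.factorial * N1 ^ d with hA
  set q : ℚ := (1 / (d.factorial : ℚ)) * ((d * c).factorial / ((c.factorial : ℚ) ^ d)) with hq
  have hA0 : (A : ℚ) ≠ 0 := by
    rw [hA, hN1]
    push_cast
    positivity
  have key : (A : ℚ) • hyperPf d (c * k)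
        (fun v : Fin (c * k) → Fin (d * (c * k)) =>
          ∑ π ∈ Finset.univ.filter (IsPartRep c k),
            (Equiv.Perm.sign π : ℤ) •
              ∏ i : Fin c, f fun j =>
                finCongr (Nat.mul_assoc d c k).symm (v (π (bpos c k i j))))
      = (A : ℚ) • (q • hyperPf (d * c) k f) := by
    rw [Nat.cast_smul_eq_nsmul, hbig, ← Nat.cast_smul_eq_nsmul (R := ℚ), smul_smul]
    congr 1
    rw [hq, hA, hN1]
    have hd' : (d.factorial : ℚ) ≠ 0 := Nat.cast_ne_zero.mpr d.factorial_ne_zero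
    have hc' : (c.factorial : ℚ) ≠ 0 := Nat.cast_ne_zero.mpr c.factorial_ne_zero
    push_cast
    field_simp
    ring
  calc hyperPf d (c * k) (fun v : Fin (c * k) → Fin (d * (c * k)) =>
        ∑ π ∈ Finset.univ.filter (IsPartRep c k),
          (Equiv.Perm.sign π : ℤ) •
            ∏ i : Fin c, f fun j =>
              finCongr (Nat.mul_assoc d c k).symm (v (π (bpos c k i j))))
      = (A : ℚ)⁻¹ • ((A : ℚ) • hyperPf d (c * k)
          (fun v : Fin (c * k) → Fin (d * (c * k)) =>
            ∑ π ∈ Finset.univ.filter (IsPartRep c k),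
              (Equiv.Perm.sign π : ℤ) •
                ∏ i : Fin c, f fun j =>
                  finCongr (Nat.mul_assoc d c k).symm (v (π (bpos c k i j))))) := by
        rw [smul_smul, inv_mul_cancel₀ hA0, one_smul]
    _ = (A : ℚ)⁻¹ • ((A : ℚ) • (q • hyperPf (d * c) k f)) := by rw [key]
    _ = q • hyperPf (d * c) k f := by rw [smul_smul, inv_mul_cancel₀ hA0, one_smul]
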